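/- Let D ⊂ H be open, let y ∈ ℝ, and let U0, W_y : D → ℝ be smooth with Δ_γ U0 = 0 and dW_y = cos Υ_y dU0 + sin Υ_y ⋆dU0 on D. Define Ψ_y(ρ,z) = e^{2U0(ρ,z) − 2W_y(ρ,z)}/√(ρ² + (z − y)²). Then Ψ_y satisfies the homogeneous twist-potential equation on D: Δ_γ Ψ_y − 4(dΨ_y, dU0)_γ = 0; equivalently, Ψ_y is harmonic for the Laplacian of the conformally rescaled flat metric γ̃ = e^{−8U0} γ used in the Green identities for the perturbed twist equations. -/

import Mathlib

open Set

/-- Partial derivative with respect to the first coordinate (ρ). -/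
noncomputable def pd1 (u : ℝ × ℝ → ℝ) (p : ℝ × ℝ) : ℝ := fderiv ℝ u p (1, 0)

/-- Partial derivative with respect to the second coordinate (z). -/
noncomputable def pd2 (u : ℝ × ℝ → ℝ) (p : ℝ × ℝ) : ℝ := fderiv ℝ u p (0, 1)

/-- The axisymmetric Laplacian Δ_γ u = u_ρρ + u_zz + (1/ρ) u_ρ. -/
noncomputable def lapγ (u : ℝ × ℝ → ℝ) (p : ℝ × ℝ) : ℝ :=
  pd1 (pd1 u) p + pd2 (pd2 u) p + (1 / p.1) * pd1 u p

/-- Flat scalar product (du, dv)_γ = u_ρ v_ρ + u_z v_z. -/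
noncomputable def dotγ (u v : ℝ × ℝ → ℝ) (p : ℝ × ℝ) : ℝ :=
  pd1 u p * pd1 v p + pd2 u p * pd2 v p

/-- cos Υ_y(ρ,z) = (z − y)/√(ρ² + (z − y)²). -/
noncomputable def cosΥ (y : ℝ) (p : ℝ × ℝ) : ℝ :=
  (p.2 - y) / Real.sqrt (p.1 ^ 2 + (p.2 - y) ^ 2)

/-- sin Υ_y(ρ,z) = ρ/√(ρ² + (z − y)²). -/
noncomputable def sinΥ (y : ℝ) (p : ℝ × ℝ) : ℝ :=
  p.1 / Real.sqrt (p.1 ^ 2 + (p.2 - y) ^ 2)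

/-- The continuous linear map (the 1-form) `A dρ + B dz` at a point. -/
noncomputable def oneForm (A B : ℝ) : ℝ × ℝ →L[ℝ] ℝ :=
  A • ContinuousLinearMap.fst ℝ ℝ ℝ + B • ContinuousLinearMap.snd ℝ ℝ ℝ

/-- Ψ_y = e^{2U0 − 2W_y}/√(ρ² + (z − y)²). -/
noncomputable def PsiF (U0 W : ℝ × ℝ → ℝ) (y : ℝ) (p : ℝ × ℝ) : ℝ :=
  Real.exp (2 * U0 p - 2 * W p) / Real.sqrt (p.1 ^ 2 + (p.2 - y) ^ 2)

lemma oneForm_apply (A B : ℝ) (v : ℝ × ℝ) : oneForm A B v = A * v.1 + B * v.2 := by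
  simp [oneForm]

lemma clm_eq_oneForm (L : ℝ × ℝ →L[ℝ] ℝ) : L = oneForm (L (1, 0)) (L (0, 1)) := by
  refine ContinuousLinearMap.ext fun v => ?_
  have hv : v = v.1 • ((1:ℝ), (0:ℝ)) + v.2 • ((0:ℝ), (1:ℝ)) := by simp [Prod.ext_iff]
  rw [oneForm_apply]
  calc L v = L (v.1 • ((1:ℝ), (0:ℝ)) + v.2 • ((0:ℝ), (1:ℝ))) := by rw [← hv]
    _ = v.1 * L (1, 0) + v.2 * L (0, 1) := by
        rw [map_add, map_smul, map_smul]; simp [mul_comm]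
  ring

def HPD (u : ℝ × ℝ → ℝ) (p : ℝ × ℝ) (A B : ℝ) : Prop := HasFDerivAt u (oneForm A B) p

lemma hpd_of_hasFDerivAt {u : ℝ × ℝ → ℝ} {L : ℝ × ℝ →L[ℝ] ℝ} {p : ℝ × ℝ}
    (h : HasFDerivAt u L p) : HPD u p (L (1, 0)) (L (0, 1)) := by
  rw [HPD, ← clm_eq_oneForm]; exact h

lemma HPD.congr' {u : ℝ × ℝ → ℝ} {p : ℝ × ℝ} {A B A' B' : ℝ}
    (h : HPD u p A B) (hA : A = A') (hB : B = B') : HPD u p A' B' := hA ▸ hB ▸ h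

lemma HPD.pd1 {u : ℝ × ℝ → ℝ} {p : ℝ × ℝ} {A B : ℝ} (h : HPD u p A B) : pd1 u p = A := by
  rw [_root_.pd1, HasFDerivAt.fderiv h, oneForm_apply]; ring

lemma HPD.pd2 {u : ℝ × ℝ → ℝ} {p : ℝ × ℝ} {A B : ℝ} (h : HPD u p A B) : pd2 u p = B := by
  rw [_root_.pd2, HasFDerivAt.fderiv h, oneForm_apply]; ring

lemma hpd_of_diff {u : ℝ × ℝ → ℝ} {p : ℝ × ℝ} (h : DifferentiableAt ℝ u p) :
    HPD u p (pd1 u p) (pd2 u p) := hpd_of_hasFDerivAt h.hasFDerivAt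

lemma hpd_fst (p : ℝ × ℝ) : HPD (fun q => q.1) p 1 0 := by
  have h := hpd_of_hasFDerivAt (hasFDerivAt_fst (p := p) (𝕜 := ℝ))
  simpa using h

lemma hpd_snd (p : ℝ × ℝ) : HPD (fun q => q.2) p 0 1 := by
  have h := hpd_of_hasFDerivAt (hasFDerivAt_snd (p := p) (𝕜 := ℝ))
  simpa using h

lemma hpd_const (p : ℝ × ℝ) (c : ℝ) : HPD (fun _ => c) p 0 0 := by
  have h := hpd_of_hasFDerivAt (hasFDerivAt_const c p)
  simpa using h

lemma HPD.add {u v : ℝ × ℝ → ℝ} {p : ℝ × ℝ} {A B C D : ℝ}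
    (hu : HPD u p A B) (hv : HPD v p C D) : HPD (fun q => u q + v q) p (A + C) (B + D) := by
  have h := hpd_of_hasFDerivAt (HasFDerivAt.add hu hv)
  exact h.congr' (by simp [oneForm_apply]) (by simp [oneForm_apply])

lemma HPD.sub {u v : ℝ × ℝ → ℝ} {p : ℝ × ℝ} {A B C D : ℝ}
    (hu : HPD u p A B) (hv : HPD v p C D) : HPD (fun q => u q - v q) p (A - C) (B - D) := by
  have h := hpd_of_hasFDerivAt (HasFDerivAt.sub hu hv)
  exact h.congr' (by simp [oneForm_apply]) (by simp [oneForm_apply])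

lemma HPD.sub_const {u : ℝ × ℝ → ℝ} {p : ℝ × ℝ} {A B : ℝ}
    (hu : HPD u p A B) (c : ℝ) : HPD (fun q => u q - c) p A B := by
  have h := hu.sub (hpd_const p c)
  simpa using h

lemma HPD.mul {u v : ℝ × ℝ → ℝ} {p : ℝ × ℝ} {A B C D : ℝ}
    (hu : HPD u p A B) (hv : HPD v p C D) :
    HPD (fun q => u q * v q) p (A * v p + u p * C) (B * v p + u p * D) := by
  have h := hpd_of_hasFDerivAt (HasFDerivAt.mul hu hv)
  exact h.congr' (by simp [oneForm_apply]; ring) (by simp [oneForm_apply]; ring)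

lemma HPD.const_mul {u : ℝ × ℝ → ℝ} {p : ℝ × ℝ} {A B : ℝ}
    (hu : HPD u p A B) (c : ℝ) : HPD (fun q => c * u q) p (c * A) (c * B) := by
  have h := (hpd_const p c).mul hu
  exact h.congr' (by ring) (by ring)

lemma HPD.pow {u : ℝ × ℝ → ℝ} {p : ℝ × ℝ} {A B : ℝ}
    (hu : HPD u p A B) : HPD (fun q => u q ^ 2) p (2 * u p * A) (2 * u p * B) := by
  have h := hpd_of_hasFDerivAt ((hasDerivAt_pow 2 (u p)).comp_hasFDerivAt p hu)
  exact h.congr' (by simp [oneForm_apply]) (by simp [oneForm_apply])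

lemma HPD.exp {u : ℝ × ℝ → ℝ} {p : ℝ × ℝ} {A B : ℝ}
    (hu : HPD u p A B) :
    HPD (fun q => Real.exp (u q)) p (Real.exp (u p) * A) (Real.exp (u p) * B) := by
  have h := hpd_of_hasFDerivAt (HasFDerivAt.exp hu)
  exact h.congr' (by simp [oneForm_apply]) (by simp [oneForm_apply])

lemma HPD.sqrt {u : ℝ × ℝ → ℝ} {p : ℝ × ℝ} {A B : ℝ}
    (hu : HPD u p A B) (h0 : u p ≠ 0) :
    HPD (fun q => Real.sqrt (u q)) p (A / (2 * Real.sqrt (u p))) (B / (2 * Real.sqrt (u p))) := by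
  have h := hpd_of_hasFDerivAt (HasFDerivAt.sqrt hu h0)
  exact h.congr' (by simp [oneForm_apply]; ring) (by simp [oneForm_apply]; ring)

lemma HPD.inv {u : ℝ × ℝ → ℝ} {p : ℝ × ℝ} {A B : ℝ}
    (hu : HPD u p A B) (h0 : u p ≠ 0) :
    HPD (fun q => (u q)⁻¹) p (-A / (u p) ^ 2) (-B / (u p) ^ 2) := by
  have h := hpd_of_hasFDerivAt ((hasDerivAt_inv h0).comp_hasFDerivAt p hu)
  refine h.congr' ?_ ?_ <;> simp [oneForm_apply] <;> field_simp

lemma HPD.div {u v : ℝ × ℝ → ℝ} {p : ℝ × ℝ} {A B C D : ℝ}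
    (hu : HPD u p A B) (hv : HPD v p C D) (h0 : v p ≠ 0) :
    HPD (fun q => u q / v q) p ((A * v p - u p * C) / (v p) ^ 2)
      ((B * v p - u p * D) / (v p) ^ 2) := by
  have h := hu.mul (hv.inv h0)
  have he : (fun q => u q / v q) = fun q => u q * (v q)⁻¹ := by
    funext q; rw [div_eq_mul_inv]
  rw [he]
  refine h.congr' ?_ ?_ <;> field_simp <;> ring

lemma hpd_rsq (y : ℝ) (q : ℝ × ℝ) :
    HPD (fun q => q.1 ^ 2 + (q.2 - y) ^ 2) q (2 * q.1) (2 * (q.2 - y)) := by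
  have h := ((hpd_fst q).pow).add (((hpd_snd q).sub_const y).pow)
  exact h.congr' (by ring) (by ring)

lemma psiHPD (U0 Wy : ℝ × ℝ → ℝ) (y : ℝ) (q : ℝ × ℝ) (hq : 0 < q.1)
    (hU : DifferentiableAt ℝ U0 q) (hW : DifferentiableAt ℝ Wy q) :
    HPD (PsiF U0 Wy y) q
      (PsiF U0 Wy y q *
        (2 * pd1 U0 q - 2 * pd1 Wy q - q.1 / (q.1 ^ 2 + (q.2 - y) ^ 2)))
      (PsiF U0 Wy y q *
        (2 * pd2 U0 q - 2 * pd2 Wy q - (q.2 - y) / (q.1 ^ 2 + (q.2 - y) ^ 2))) := by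
  have hR0 : 0 < q.1 ^ 2 + (q.2 - y) ^ 2 := by positivity
  have hr : 0 < Real.sqrt (q.1 ^ 2 + (q.2 - y) ^ 2) := Real.sqrt_pos.2 hR0
  have hr2 : Real.sqrt (q.1 ^ 2 + (q.2 - y) ^ 2) ^ 2 = q.1 ^ 2 + (q.2 - y) ^ 2 :=
    Real.sq_sqrt hR0.le
  have hS := (hpd_rsq y q).sqrt hR0.ne'
  have hE := (((hpd_of_diff hU).const_mul 2).sub ((hpd_of_diff hW).const_mul 2)).exp
  have h := hE.div hS hr.ne'
  have hPsi : PsiF U0 Wy y q =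
      Real.exp (2 * U0 q - 2 * Wy q) / Real.sqrt (q.1 ^ 2 + (q.2 - y) ^ 2) := rfl
  refine HPD.congr' h ?_ ?_ <;>
  · rw [hPsi]
    generalize hgen : Real.sqrt (q.1 ^ 2 + (q.2 - y) ^ 2) = r
    rw [hgen] at hr hr2
    rw [← hr2]
    field_simp
    all_goals ring

lemma hpd_cos (y : ℝ) (p : ℝ × ℝ) (hp : 0 < p.1) :
    HPD (cosΥ y) p
      (-((p.2 - y) * p.1) / Real.sqrt (p.1 ^ 2 + (p.2 - y) ^ 2) ^ 3)
      ((Real.sqrt (p.1 ^ 2 + (p.2 - y) ^ 2) ^ 2 - (p.2 - y) ^ 2) /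
        Real.sqrt (p.1 ^ 2 + (p.2 - y) ^ 2) ^ 3) := by
  have hR0 : 0 < p.1 ^ 2 + (p.2 - y) ^ 2 := by positivity
  have hr : 0 < Real.sqrt (p.1 ^ 2 + (p.2 - y) ^ 2) := Real.sqrt_pos.2 hR0
  have hS := (hpd_rsq y p).sqrt hR0.ne'
  have h := ((hpd_snd p).sub_const y).div hS hr.ne'
  refine h.congr' ?_ ?_ <;>
  · generalize hgen : Real.sqrt (p.1 ^ 2 + (p.2 - y) ^ 2) = r
    rw [hgen] at hr
    field_simp
    all_goals ring

lemma hpd_sin (y : ℝ) (p : ℝ × ℝ) (hp : 0 < p.1) :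
    HPD (sinΥ y) p
      ((Real.sqrt (p.1 ^ 2 + (p.2 - y) ^ 2) ^ 2 - p.1 ^ 2) /
        Real.sqrt (p.1 ^ 2 + (p.2 - y) ^ 2) ^ 3)
      (-(p.1 * (p.2 - y)) / Real.sqrt (p.1 ^ 2 + (p.2 - y) ^ 2) ^ 3) := by
  have hR0 : 0 < p.1 ^ 2 + (p.2 - y) ^ 2 := by positivity
  have hr : 0 < Real.sqrt (p.1 ^ 2 + (p.2 - y) ^ 2) := Real.sqrt_pos.2 hR0
  have hS := (hpd_rsq y p).sqrt hR0.ne'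
  have h := (hpd_fst p).div hS hr.ne'
  refine h.congr' ?_ ?_ <;>
  · generalize hgen : Real.sqrt (p.1 ^ 2 + (p.2 - y) ^ 2) = r
    rw [hgen] at hr
    field_simp
    all_goals ring

lemma pd1_congr {u v : ℝ × ℝ → ℝ} {p : ℝ × ℝ} (h : u =ᶠ[nhds p] v) :
    pd1 u p = pd1 v p := by unfold pd1; rw [Filter.EventuallyEq.fderiv_eq h]

lemma pd2_congr {u v : ℝ × ℝ → ℝ} {p : ℝ × ℝ} (h : u =ᶠ[nhds p] v) :
    pd2 u p = pd2 v p := by unfold pd2; rw [Filter.EventuallyEq.fderiv_eq h]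

lemma scalar_identity (P uu1 uu2 aa bb dd rho zzv r : ℝ) (hρ : rho ≠ 0) (hr : r ≠ 0)
    (hr2 : r ^ 2 = rho ^ 2 + zzv ^ 2)
    (hharm' : aa * rho + dd * rho + uu1 = 0) :
    P * (2 * uu1 - 2 * (zzv / r * uu1 + rho / r * uu2) - rho / r ^ 2) *
              (2 * uu1 - 2 * (zzv / r * uu1 + rho / r * uu2) - rho / r ^ 2) +
            P *
              (2 * aa -
                  2 * (-(zzv * rho) / r ^ 3 * uu1 + zzv / r * aa + ((r ^ 2 - rho ^ 2) / r ^ 3 * uu2 + rho / r * bb)) -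
                (1 * r ^ 2 - rho * (2 * rho)) / (r ^ 2) ^ 2) +
          (P * (2 * uu2 - 2 * (zzv / r * uu2 - rho / r * uu1) - zzv / r ^ 2) *
              (2 * uu2 - 2 * (zzv / r * uu2 - rho / r * uu1) - zzv / r ^ 2) +
            P *
              (2 * dd -
                  2 * ((r ^ 2 - zzv ^ 2) / r ^ 3 * uu2 + zzv / r * dd - (-(rho * zzv) / r ^ 3 * uu1 + rho / r * bb)) -
                (1 * r ^ 2 - zzv * (2 * zzv)) / (r ^ 2) ^ 2)) +
        1 / rho * (P * (2 * uu1 - 2 * (zzv / r * uu1 + rho / r * uu2) - rho / r ^ 2)) -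
      4 *
        (P * (2 * uu1 - 2 * (zzv / r * uu1 + rho / r * uu2) - rho / r ^ 2) * uu1 +
          P * (2 * uu2 - 2 * (zzv / r * uu2 - rho / r * uu1) - zzv / r ^ 2) * uu2) =
    0 := by
  field_simp
  linear_combination ((-3)*rho*P + (-6)*rho*r*uu2*P + (-4)*rho*r^2*uu2^2*P
      + (-4)*rho*r^2*uu1^2*P) * hr2
    + ((2)*r^4*P + (-2)*zzv*r^3*P) * hharm'

theorem Psi_satisfies_twist_equation
    (D : Set (ℝ × ℝ)) (hDopen : IsOpen D) (hDH : D ⊆ {p : ℝ × ℝ | 0 < p.1})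
    (y : ℝ)
    (U0 Wy : ℝ × ℝ → ℝ)
    (hU0 : ContDiffOn ℝ (⊤ : ℕ∞) U0 D) (hWy : ContDiffOn ℝ (⊤ : ℕ∞) Wy D)
    (hU0harm : ∀ p ∈ D, lapγ U0 p = 0)
    (hWρ : ∀ p ∈ D, pd1 Wy p = cosΥ y p * pd1 U0 p + sinΥ y p * pd2 U0 p)
    (hWz : ∀ p ∈ D, pd2 Wy p = cosΥ y p * pd2 U0 p - sinΥ y p * pd1 U0 p) :
    ∀ p ∈ D, lapγ (PsiF U0 Wy y) p - 4 * dotγ (PsiF U0 Wy y) U0 p = 0 := by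
  intro p hp
  have hρ : 0 < p.1 := hDH hp
  have hmem : D ∈ nhds p := hDopen.mem_nhds hp
  have hR0 : 0 < p.1 ^ 2 + (p.2 - y) ^ 2 := by positivity
  have hr : 0 < Real.sqrt (p.1 ^ 2 + (p.2 - y) ^ 2) := Real.sqrt_pos.2 hR0
  have hr2 : (Real.sqrt (p.1 ^ 2 + (p.2 - y) ^ 2)) ^ 2 = p.1 ^ 2 + (p.2 - y) ^ 2 :=
    Real.sq_sqrt hR0.le
  have hUd : ∀ q ∈ D, DifferentiableAt ℝ U0 q := fun q hq =>
    (hU0.contDiffAt (hDopen.mem_nhds hq)).differentiableAt (by simp)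
  have hWd : ∀ q ∈ D, DifferentiableAt ℝ Wy q := fun q hq =>
    (hWy.contDiffAt (hDopen.mem_nhds hq)).differentiableAt (by simp)
  have hU0p : ContDiffAt ℝ (⊤ : ℕ∞) U0 p := hU0.contDiffAt hmem
  have hfd : HasFDerivAt (fderiv ℝ U0) (fderiv ℝ (fderiv ℝ U0) p) p :=
    ((hU0p.fderiv_right (m := 1) (by exact WithTop.coe_le_coe.2 le_top)).differentiableAt one_ne_zero).hasFDerivAt
  have hev : ∀ᶠ q in nhds p, HasFDerivAt U0 (fderiv ℝ U0 q) q := by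
    filter_upwards [hmem] with q hq using (hUd q hq).hasFDerivAt
  have hsym : fderiv ℝ (fderiv ℝ U0) p (0, 1) (1, 0)
      = fderiv ℝ (fderiv ℝ U0) p (1, 0) (0, 1) :=
    second_derivative_symmetric_of_eventually hev hfd _ _
  have hpu1 : HPD (pd1 U0) p (fderiv ℝ (fderiv ℝ U0) p (1, 0) (1, 0))
      (fderiv ℝ (fderiv ℝ U0) p (0, 1) (1, 0)) := by
    have h := hpd_of_hasFDerivAt (hfd.clm_apply (hasFDerivAt_const (((1:ℝ), (0:ℝ))) p))
    exact h.congr' (by simp) (by simp)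
  have hpu2 : HPD (pd2 U0) p (fderiv ℝ (fderiv ℝ U0) p (1, 0) (0, 1))
      (fderiv ℝ (fderiv ℝ U0) p (0, 1) (0, 1)) := by
    have h := hpd_of_hasFDerivAt (hfd.clm_apply (hasFDerivAt_const (((0:ℝ), (1:ℝ))) p))
    exact h.congr' (by simp) (by simp)
  have hharm : fderiv ℝ (fderiv ℝ U0) p (1, 0) (1, 0)
      + fderiv ℝ (fderiv ℝ U0) p (0, 1) (0, 1) + 1 / p.1 * pd1 U0 p = 0 := by
    have h := hU0harm p hp
    rw [lapγ, hpu1.pd1, hpu2.pd2] at h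
    exact h
  have hΨ := psiHPD U0 Wy y p hρ (hUd p hp) (hWd p hp)
  rw [hWρ p hp, hWz p hp] at hΨ
  have hev1 : pd1 (PsiF U0 Wy y) =ᶠ[nhds p] (fun q => PsiF U0 Wy y q *
      (2 * pd1 U0 q - 2 * (cosΥ y q * pd1 U0 q + sinΥ y q * pd2 U0 q)
        - q.1 / (q.1 ^ 2 + (q.2 - y) ^ 2))) := by
    filter_upwards [hmem] with q hq
    rw [(psiHPD U0 Wy y q (hDH hq) (hUd q hq) (hWd q hq)).pd1, hWρ q hq]
  have hev2 : pd2 (PsiF U0 Wy y) =ᶠ[nhds p] (fun q => PsiF U0 Wy y q *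
      (2 * pd2 U0 q - 2 * (cosΥ y q * pd2 U0 q - sinΥ y q * pd1 U0 q)
        - (q.2 - y) / (q.1 ^ 2 + (q.2 - y) ^ 2))) := by
    filter_upwards [hmem] with q hq
    rw [(psiHPD U0 Wy y q (hDH hq) (hUd q hq) (hWd q hq)).pd2, hWz q hq]
  have hcos := hpd_cos y p hρ
  have hsin := hpd_sin y p hρ
  have hQ1 := hΨ.mul (((hpu1.const_mul 2).sub
      (((hcos.mul hpu1).add (hsin.mul hpu2)).const_mul 2)).sub
      ((hpd_fst p).div (hpd_rsq y p) hR0.ne'))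
  have hQ2 := hΨ.mul (((hpu2.const_mul 2).sub
      (((hcos.mul hpu2).sub (hsin.mul hpu1)).const_mul 2)).sub
      (((hpd_snd p).sub_const y).div (hpd_rsq y p) hR0.ne'))
  simp only [lapγ, dotγ]
  rw [pd1_congr hev1, pd2_congr hev2, hQ1.pd1, hQ2.pd2, hΨ.pd1, hΨ.pd2, hsym]
  simp only [cosΥ, sinΥ]
  obtain ⟨r, hgen⟩ : ∃ r, Real.sqrt (p.1 ^ 2 + (p.2 - y) ^ 2) = r := ⟨_, rfl⟩
  rw [hgen] at hr hr2 ⊢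
  rw [← hr2]
  have hharm' : fderiv ℝ (fderiv ℝ U0) p (1, 0) (1, 0) * p.1
      + fderiv ℝ (fderiv ℝ U0) p (0, 1) (0, 1) * p.1 + pd1 U0 p = 0 := by
    field_simp [hρ.ne'] at hharm
    linarith [hharm]
  exact scalar_identity (PsiF U0 Wy y p) (pd1 U0 p) (pd2 U0 p)
    (fderiv ℝ (fderiv ℝ U0) p (1, 0) (1, 0)) (fderiv ℝ (fderiv ℝ U0) p (1, 0) (0, 1))
    (fderiv ℝ (fderiv ℝ U0) p (0, 1) (0, 1)) p.1 (p.2 - y) r hρ.ne' hr.ne' hr2 hharm'
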